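/- arXiv:1709.06771 — 6 statements merged into one kernel-verified Lean document; each statement's English description precedes it below -/
import Mathlib

section
/- Let T > 0 and let p : [0,T] → ℝ be continuous. For each N ≥ 1 let p^N : Ω × [0,T] → ℝ be a stochastic process on a probability space (Ω, F, P) such that for every ω the map t ↦ p^N_t(ω) is nonincreasing on [0,T], each p^N_t is measurable, and for every fixed t ∈ [0,T] the sequence p^N_t converges to p_t in probability as N → ∞. Then sup_{t∈[0,T]} |p^N_t − p_t| converges to 0 in probability as N → ∞ (this supremum is a well-defined random variable since each p^N(ω,·) is monotone and p is continuous, so it equals the supremum over rationals in [0,T] together with the endpoints). -/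
/-!
Fix `ε > 0`. By uniform continuity of `p` on `[0,T]`, a fine enough finite grid `S ⊆ [0,T]`
brackets every `t` between two grid points `u ≤ t ≤ v` at which `p` is `ε/2`-close to `p t`.
If a nonincreasing `f` is `ε/2`-close to `p` at every grid point, then
`p t - ε ≤ p v - ε/2 ≤ f v ≤ f t ≤ f u ≤ p u + ε/2 ≤ p t + ε`, so `f` is `ε`-close to `p` on
all of `[0,T]`. Hence the event `sup_t |p^N_t - p_t| > ε` lies in the finite union of the events
`|p^N_s - p_s| > ε/2`, `s ∈ S`, whose probabilities tend to `0`.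
-/

open MeasureTheory Set Filter
open scoped Topology

lemma exists_finset_bracket_sub_le (a b : ℝ) {δ : ℝ} (hδ : 0 < δ) :
    ∃ S : Finset ℝ, (∀ s ∈ S, s ∈ Icc a b) ∧
      ∀ t ∈ Icc a b, ∃ u ∈ S, ∃ v ∈ S, u ≤ t ∧ t ≤ v ∧ v - u ≤ δ := by
  rcases lt_or_ge b a with hba | hab
  · exact ⟨∅, by simp, fun t ht => absurd (ht.1.trans ht.2) (not_le.2 hba)⟩
  set grid : ℕ → ℝ := fun k => min (a + k * δ) b
  have grid_mem : ∀ k, grid k ∈ Icc a b := fun k =>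
    ⟨le_min (le_add_of_nonneg_right (by positivity)) hab, min_le_right _ _⟩
  refine ⟨(Finset.range (⌊(b - a) / δ⌋₊ + 2)).image grid, ?_, ?_⟩
  · simp only [Finset.mem_image]
    rintro _ ⟨k, -, rfl⟩
    exact grid_mem k
  rintro t ⟨hat, htb⟩
  set k := ⌊(t - a) / δ⌋₊
  have hk_le : (k : ℝ) * δ ≤ t - a :=
    (le_div_iff₀ hδ).1 (Nat.floor_le (div_nonneg (sub_nonneg.2 hat) hδ.le))
  have hk_lt : t - a < (k + 1) * δ :=
    (div_lt_iff₀ hδ).1 (Nat.lt_floor_add_one _)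
  have hk_range : k ≤ ⌊(b - a) / δ⌋₊ := Nat.floor_le_floor (by gcongr)
  have grid_k : grid k = a + k * δ := min_eq_left (by linarith)
  refine ⟨grid k, Finset.mem_image_of_mem _ (Finset.mem_range.2 (by omega)),
    grid (k + 1), Finset.mem_image_of_mem _ (Finset.mem_range.2 (by omega)), by linarith,
    le_min (by push_cast; linarith) htb, ?_⟩
  have : grid (k + 1) ≤ a + (k + 1) * δ := by
    simpa only [grid, Nat.cast_succ] using min_le_left (a + ((k + 1 : ℕ) : ℝ) * δ) b
  linarith

lemma abs_sub_le_of_antitoneOn_bracket {f g : ℝ → ℝ} {s : Set ℝ} (hf : AntitoneOn f s)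
    {u t v η η' : ℝ} (hu : u ∈ s) (ht : t ∈ s) (hv : v ∈ s) (hut : u ≤ t) (htv : t ≤ v)
    (hfu : |f u - g u| ≤ η) (hfv : |f v - g v| ≤ η)
    (hgu : |g u - g t| ≤ η') (hgv : |g v - g t| ≤ η') :
    |f t - g t| ≤ η + η' := by
  have := hf hu ht hut
  have := hf ht hv htv
  rw [abs_le] at *
  constructor <;> linarith

lemma ContinuousOn.exists_finset_abs_sub_le_of_antitoneOn {g : ℝ → ℝ} {a b : ℝ}
    (hg : ContinuousOn g (Icc a b)) {ε : ℝ} (hε : 0 < ε) :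
    ∃ S : Finset ℝ, (∀ s ∈ S, s ∈ Icc a b) ∧ ∀ f : ℝ → ℝ, AntitoneOn f (Icc a b) →
      (∀ s ∈ S, |f s - g s| ≤ ε) → ∀ t ∈ Icc a b, |f t - g t| ≤ ε + ε := by
  obtain ⟨δ, hδ, hgδ⟩ := Metric.uniformContinuousOn_iff_le.1
    (isCompact_Icc.uniformContinuousOn_of_continuous hg) ε hε
  obtain ⟨S, hS, hbracket⟩ := exists_finset_bracket_sub_le a b hδ
  refine ⟨S, hS, fun f hf hfS t ht => ?_⟩
  obtain ⟨u, huS, v, hvS, hut, htv, huv⟩ := hbracket t ht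
  have close : ∀ x ∈ S, |x - t| ≤ δ → |g x - g t| ≤ ε := fun x hx hxt =>
    hgδ x (hS x hx) t ht hxt
  refine abs_sub_le_of_antitoneOn_bracket hf (hS u huS) ht (hS v hvS) hut htv
    (hfS u huS) (hfS v hvS) (close u huS ?_) (close v hvS ?_)
  all_goals rw [abs_le]; constructor <;> linarith

lemma tendsto_measure_biUnion_finset_zero {Ω ι α : Type*} [MeasurableSpace Ω] (μ : Measure Ω)
    {l : Filter α} (S : Finset ι) {A : α → ι → Set Ω}
    (hA : ∀ i ∈ S, Tendsto (fun n => μ (A n i)) l (𝓝 0)) :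
    Tendsto (fun n => μ (⋃ i ∈ S, A n i)) l (𝓝 0) := by
  have hsum := tendsto_finsetSum S hA
  rw [Finset.sum_const_zero] at hsum
  exact tendsto_of_tendsto_of_tendsto_of_le_of_le tendsto_const_nhds hsum
    (fun _ => zero_le) (fun n => measure_biUnion_finset_le S (A n))

theorem stmt_1_general {Ω : Type*} [MeasurableSpace Ω] (P : Measure Ω)
    (T : ℝ) (p : ℝ → ℝ) (hp : ContinuousOn p (Set.Icc 0 T))
    (pN : ℕ → Ω → ℝ → ℝ)
    (hmono : ∀ N ω, AntitoneOn (pN N ω) (Set.Icc 0 T))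
    (hconv : ∀ t ∈ Set.Icc (0 : ℝ) T, ∀ ε : ℝ, 0 < ε →
        Tendsto (fun N => P {ω | ε < |pN N ω t - p t|}) atTop (𝓝 0)) :
    ∀ ε : ℝ, 0 < ε →
      Tendsto (fun N => P {ω | ε < ⨆ t : Set.Icc (0 : ℝ) T, |pN N ω t - p t|})
        atTop (𝓝 0) := by
  intro ε hε
  obtain ⟨S, hS, hdini⟩ := hp.exists_finset_abs_sub_le_of_antitoneOn (half_pos hε)
  have hsub : ∀ N, {ω | ε < ⨆ t : Set.Icc (0 : ℝ) T, |pN N ω t - p t|} ⊆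
      ⋃ s ∈ S, {ω | ε / 2 < |pN N ω s - p s|} := by
    intro N ω hω
    by_contra hω'
    simp only [mem_iUnion, mem_ofPred_eq, not_exists, not_lt] at hω'
    refine (not_le.2 (mem_ofPred_eq ▸ hω)) (Real.iSup_le (fun t => ?_) hε.le)
    simpa using hdini (pN N ω) (hmono N ω) hω' t t.2
  exact tendsto_of_tendsto_of_tendsto_of_le_of_le tendsto_const_nhds
    (tendsto_measure_biUnion_finset_zero P S fun s hs => hconv s (hS s hs) _ (half_pos hε))
    (fun _ => zero_le) (fun N => measure_mono (hsub N))

/-- Dini-type lemma: if for each `N` the random function `t ↦ p^N_t(ω)` is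
nonincreasing on `[0,T]`, the limit `p` is continuous on `[0,T]`, and `p^N_t → p_t` in
probability for each fixed `t ∈ [0,T]`, then `sup_{t ∈ [0,T]} |p^N_t − p_t| → 0` in
probability. -/
theorem stmt_1 {Ω : Type*} [MeasurableSpace Ω] (P : Measure Ω) [IsProbabilityMeasure P]
    (T : ℝ) (hT : 0 < T) (p : ℝ → ℝ) (hp : ContinuousOn p (Set.Icc 0 T))
    (pN : ℕ → Ω → ℝ → ℝ)
    (hmono : ∀ N ω, AntitoneOn (pN N ω) (Set.Icc 0 T))
    (hmeas : ∀ N t, Measurable fun ω => pN N ω t)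
    (hconv : ∀ t ∈ Set.Icc (0 : ℝ) T, ∀ ε : ℝ, 0 < ε →
        Tendsto (fun N => P {ω | ε < |pN N ω t - p t|}) atTop (𝓝 0)) :
    ∀ ε : ℝ, 0 < ε →
      Tendsto (fun N => P {ω | ε < ⨆ t : Set.Icc (0 : ℝ) T, |pN N ω t - p t|})
        atTop (𝓝 0) :=
  stmt_1_general P T p hp pN hmono hconv
end

section
/- Let (Ω, F, (F_t)_{t≥0}, P) be a filtered probability space and τ a stopping time with respect to (F_t). Let F_τ denote the stopped σ-algebra {A ∈ F : A ∩ {τ ≤ t} ∈ F_t for all t}, and let F_{τ⁻} denote the σ-algebra generated by F_0 together with all sets of the form A ∩ {t < τ} with t ≥ 0 and A ∈ F_t. Let U be an integrable real random variable that is F_τ-measurable and satisfies E[U | F_{τ⁻}] = 0 almost surely. Then the process t ↦ U · 1_{τ ≤ t} is a martingale with respect to (F_t)_{t≥0}. -/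
open MeasureTheory Set
open scoped NNReal

/-! For `A ∈ ℱ t`, `∫_A U 1_{τ ≤ t} = ∫_A U - ∫_{A ∩ {t < τ}} U`, and the last integral vanishes
because `A ∩ {t < τ}` is one of the generators of `F_{τ⁻}`, on which `U` has conditional
expectation zero. So for `A ∈ ℱ s` the integral `∫_A U 1_{τ ≤ t}` is the same for every `t ≥ s`,
which is the martingale property; adaptedness is exactly the `F_τ`-measurability of `U`. -/

namespace MeasureTheory

theorem setIntegral_eq_zero_of_condExp_ae_eq_zero {Ω E : Type*} {m m₀ : MeasurableSpace Ω}
    {μ : Measure Ω} [NormedAddCommGroup E] [NormedSpace ℝ E] [CompleteSpace E] {f : Ω → E}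
    (hm : m ≤ m₀) [SigmaFinite (μ.trim hm)] (hf : Integrable f μ) (hf0 : μ[f | m] =ᵐ[μ] 0)
    {s : Set Ω} (hs : MeasurableSet[m] s) : ∫ ω in s, f ω ∂μ = 0 := by
  rw [← setIntegral_condExp hm hf hs]
  exact integral_eq_zero_of_ae (ae_restrict_of_ae hf0)

variable {Ω ι : Type*} {m : MeasurableSpace Ω} {μ : Measure Ω}

theorem martingale_of_setIntegral_eq [Preorder ι] {ℱ : Filtration ι m}
    [SigmaFiniteFiltration μ ℱ] {E : Type*} [NormedAddCommGroup E] [NormedSpace ℝ E]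
    [CompleteSpace E] {f : ι → Ω → E}
    (hadp : StronglyAdapted ℱ f) (hint : ∀ i, Integrable (f i) μ)
    (hf : ∀ i j, i ≤ j → ∀ s, MeasurableSet[ℱ i] s → ∫ ω in s, f i ω ∂μ = ∫ ω in s, f j ω ∂μ) :
    Martingale f ℱ μ :=
  ⟨hadp, fun i j hij => (ae_eq_condExp_of_forall_setIntegral_eq (ℱ.le i) (hint j)
    (fun _ _ _ => (hint i).integrableOn) (fun s hs _ => hf i j hij s hs)
    (hadp i).aestronglyMeasurable).symm⟩

namespace IsStoppingTime

variable {τ : Ω → WithTop ι}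

theorem measurable_indicator_le [Preorder ι] {ℱ : Filtration ι m} {β : Type*} [Zero β]
    [MeasurableSpace β] {U : Ω → β} (hτ : IsStoppingTime ℱ τ)
    (hU : Measurable[hτ.measurableSpace] U) (i : ι) :
    Measurable[ℱ i] ({ω | τ ω ≤ i}.indicator U) := fun B hB => by
  rw [indicator_preimage]
  exact ((hU hB).2 i).union ((MeasurableSet.const ((0 : β) ∈ B)).diff (hτ.measurableSet_le i))

variable [LinearOrder ι] {ℱ : Filtration ι m}

theorem setIntegral_indicator_le (hτ : IsStoppingTime ℱ τ) {U : Ω → ℝ} (hU : Integrable U μ)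
    (i : ι) (s : Set Ω) :
    ∫ ω in s, {ω | τ ω ≤ i}.indicator U ω ∂μ
      = ∫ ω in s, U ω ∂μ - ∫ ω in s ∩ {ω | i < τ ω}, U ω ∂μ := by
  have hsdiff : s \ {ω | τ ω ≤ i} = s ∩ {ω | i < τ ω} := by
    ext ω; simp
  rw [setIntegral_indicator (ℱ.le i _ (hτ.measurableSet_le i)), ← hsdiff, eq_sub_iff_add_eq,
    integral_inter_add_sdiff (ℱ.le i _ (hτ.measurableSet_le i)) hU.integrableOn]

theorem martingale_indicator_le [SigmaFiniteFiltration μ ℱ] (hτ : IsStoppingTime ℱ τ)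
    {U : Ω → ℝ} (hU : Integrable U μ) (hUm : Measurable[hτ.measurableSpace] U)
    (hU0 : ∀ i s, MeasurableSet[ℱ i] s → ∫ ω in s ∩ {ω | i < τ ω}, U ω ∂μ = 0) :
    Martingale (fun i : ι => {ω | τ ω ≤ i}.indicator U) ℱ μ := by
  have hsetIntegral : ∀ i s, MeasurableSet[ℱ i] s →
      ∫ ω in s, {ω | τ ω ≤ i}.indicator U ω ∂μ = ∫ ω in s, U ω ∂μ := fun i s hs => by
    rw [hτ.setIntegral_indicator_le hU i s, hU0 i s hs, sub_zero]
  refine martingale_of_setIntegral_eq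
    (fun i => (hτ.measurable_indicator_le hUm i).stronglyMeasurable)
    (fun i => hU.indicator (ℱ.le i _ (hτ.measurableSet_le i))) fun i j hij s hs => ?_
  rw [hsetIntegral i s hs, hsetIntegral j s (ℱ.mono hij s hs)]

end IsStoppingTime

end MeasureTheory

/-- Let `τ` be a stopping time for a filtration `ℱ`, let `F_τ` be the stopped
σ-algebra and `F_{τ⁻}` the σ-algebra generated by `ℱ 0` together with the sets
`A ∩ {t < τ}`, `A ∈ ℱ t`.  If `U` is integrable, `F_τ`-measurable and `E[U | F_{τ⁻}] = 0`
a.s., then `t ↦ U · 1_{τ ≤ t}` is a martingale. -/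
theorem stmt_2 {Ω : Type*} {m : MeasurableSpace Ω} (ℱ : Filtration ℝ≥0 m)
    (P : Measure Ω) [IsProbabilityMeasure P]
    (τ : Ω → ℝ≥0) (hτ : IsStoppingTime ℱ (fun ω => (τ ω : WithTop ℝ≥0)))
    (U : Ω → ℝ) (hUint : Integrable U P)
    (hUmeas : Measurable[hτ.measurableSpace] U)
    (hUcond : P[U | MeasurableSpace.generateFrom
        ({s | MeasurableSet[ℱ 0] s} ∪
          {s | ∃ (t : ℝ≥0) (A : Set Ω), MeasurableSet[ℱ t] A ∧ s = A ∩ {ω | t < τ ω}})]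
        =ᵐ[P] 0) :
    Martingale (fun t ω => if τ ω ≤ t then U ω else 0) ℱ P := by
  have hgt (t : ℝ≥0) : {ω | t < τ ω} = {ω | (t : WithTop ℝ≥0) < τ ω} := by
    simp only [WithTop.coe_lt_coe]
  have hpre_le : MeasurableSpace.generateFrom
      ({s | MeasurableSet[ℱ 0] s} ∪
        {s | ∃ (t : ℝ≥0) (A : Set Ω), MeasurableSet[ℱ t] A ∧ s = A ∩ {ω | t < τ ω}}) ≤ m := by
    refine MeasurableSpace.generateFrom_le ?_
    rintro s (hs | ⟨t, A, hA, rfl⟩)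
    · exact ℱ.le 0 s hs
    · exact ℱ.le t _ (hA.inter (hgt t ▸ IsStoppingTime.measurableSet_gt hτ t))
  have hU0 (t : ℝ≥0) (A : Set Ω) (hA : MeasurableSet[ℱ t] A) :
      ∫ ω in A ∩ {ω | (t : WithTop ℝ≥0) < τ ω}, U ω ∂P = 0 :=
    hgt t ▸ setIntegral_eq_zero_of_condExp_ae_eq_zero hpre_le hUint hUcond
      (MeasurableSpace.measurableSet_generateFrom (Or.inr ⟨t, A, hA, rfl⟩))
  convert IsStoppingTime.martingale_indicator_le hτ hUint hUmeas hU0 using 2 with t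
  ext ω
  simp only [indicator_apply, mem_ofPred_eq, WithTop.coe_le_coe]
end

section
/- Let N ≥ 2 be an integer, c ≥ 0, and a_1, …, a_N real numbers with |a_i| ≤ c for every i. Fix n ∈ {1, …, N}. Define V := (1/N) Σ_{i=1}^N a_i² − ((1/N) Σ_{i=1}^N a_i)² (the empirical variance of all N values) and V' := (1/(N−1)) Σ_{i≠n} a_i² − ((1/(N−1)) Σ_{i≠n} a_i)² (the empirical variance of the N−1 values excluding a_n). Then |(1 − 1/N)² V' − V| ≤ 14 c² / N. -/
/-!
Write `S = ∑ aᵢ`, `Q = ∑ aᵢ²` and `x = aₙ`. Clearing denominators gives the exact identity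
`(1 - 1/N)² V' - V = (2 S x - Q - N x²) / N²`. Since `|S| ≤ N c` and `0 ≤ Q, N x² ≤ N c²`, the
numerator is at most `4 N c²` in absolute value, so the difference is even at most `4 c² / N`.
-/

open Finset

lemma leaveOneOut_variance_sub_eq {N S Q x : ℝ} (hN : N ≠ 0) (hN1 : N - 1 ≠ 0) :
    (1 - 1 / N) ^ 2 * ((Q - x ^ 2) / (N - 1) - ((S - x) / (N - 1)) ^ 2) - (Q / N - (S / N) ^ 2)
      = (2 * S * x - Q - N * x ^ 2) / N ^ 2 := by
  field_simp
  ring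

lemma abs_two_mul_mul_sub_sub_le {N S Q x c : ℝ} (hN : 0 ≤ N) (hS : |S| ≤ N * c)
    (hQ₀ : 0 ≤ Q) (hQ : Q ≤ N * c ^ 2) (hx : |x| ≤ c) :
    |2 * S * x - Q - N * x ^ 2| ≤ 4 * N * c ^ 2 := by
  have hSx : |S * x| ≤ N * c ^ 2 := by
    rw [abs_mul, sq, ← mul_assoc]
    exact mul_le_mul hS hx (abs_nonneg x) ((abs_nonneg S).trans hS)
  have hx2 : N * x ^ 2 ≤ N * c ^ 2 :=
    mul_le_mul_of_nonneg_left (sq_le_sq' (abs_le.mp hx).1 (abs_le.mp hx).2) hN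
  rw [abs_le] at hSx ⊢
  constructor <;> nlinarith [mul_nonneg hN (sq_nonneg x)]

lemma abs_sum_le_card_mul {ι : Type*} {s : Finset ι} {f : ι → ℝ} {c : ℝ}
    (h : ∀ i ∈ s, |f i| ≤ c) : |∑ i ∈ s, f i| ≤ #s * c := by
  simpa using (abs_sum_le_sum_abs f s).trans (sum_le_card_nsmul s _ c h)

lemma sum_sq_le_card_mul {ι : Type*} {s : Finset ι} {f : ι → ℝ} {c : ℝ}
    (h : ∀ i ∈ s, |f i| ≤ c) : ∑ i ∈ s, f i ^ 2 ≤ #s * c ^ 2 := by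
  refine (sum_le_card_nsmul s _ (c ^ 2) fun i hi => ?_).trans_eq (by simp)
  exact sq_le_sq' (abs_le.mp (h i hi)).1 (abs_le.mp (h i hi)).2

theorem stmt_4_general (N : ℕ) (hN : 2 ≤ N) (c : ℝ) (a : Fin N → ℝ)
    (ha : ∀ i, |a i| ≤ c) (n : Fin N) :
    |(1 - 1 / (N : ℝ)) ^ 2 *
          ((∑ i ∈ Finset.univ.erase n, (a i) ^ 2) / ((N : ℝ) - 1)
            - ((∑ i ∈ Finset.univ.erase n, a i) / ((N : ℝ) - 1)) ^ 2)
        - ((∑ i, (a i) ^ 2) / (N : ℝ) - ((∑ i, a i) / (N : ℝ)) ^ 2)|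
      ≤ 14 * c ^ 2 / (N : ℝ) := by
  have hN' : (2 : ℝ) ≤ N := by exact_mod_cast hN
  have hS : |∑ i, a i| ≤ N * c := by
    simpa using abs_sum_le_card_mul fun i (_ : i ∈ univ) => ha i
  have hQ : ∑ i, a i ^ 2 ≤ N * c ^ 2 := by
    simpa using sum_sq_le_card_mul fun i (_ : i ∈ univ) => ha i
  have hnum := abs_two_mul_mul_sub_sub_le (by positivity) hS (by positivity) hQ (ha n)
  rw [sum_erase_eq_sub (mem_univ n), sum_erase_eq_sub (mem_univ n),
    leaveOneOut_variance_sub_eq (by positivity) (by linarith), abs_div,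
    abs_of_nonneg (sq_nonneg (N : ℝ))]
  calc |2 * (∑ i, a i) * a n - ∑ i, a i ^ 2 - N * a n ^ 2| / (N : ℝ) ^ 2
      ≤ 4 * N * c ^ 2 / (N : ℝ) ^ 2 := by gcongr
    _ = 4 * c ^ 2 / N := by field_simp
    _ ≤ 14 * c ^ 2 / N := by gcongr; norm_num

/-- Leave-one-out empirical variance comparison: for `N ≥ 2` and reals
`a_1, …, a_N` with `|a_i| ≤ c`, the empirical variance `V` of all `N` values and the empirical
variance `V'` of the `N − 1` values excluding index `n` satisfy
`|(1 − 1/N)² V' − V| ≤ 14 c² / N`. -/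
theorem stmt_4 (N : ℕ) (hN : 2 ≤ N) (c : ℝ) (hc : 0 ≤ c) (a : Fin N → ℝ)
    (ha : ∀ i, |a i| ≤ c) (n : Fin N) :
    |(1 - 1 / (N : ℝ)) ^ 2 *
          ((∑ i ∈ Finset.univ.erase n, (a i) ^ 2) / ((N : ℝ) - 1)
            - ((∑ i ∈ Finset.univ.erase n, a i) / ((N : ℝ) - 1)) ^ 2)
        - ((∑ i, (a i) ^ 2) / (N : ℝ) - ((∑ i, a i) / (N : ℝ)) ^ 2)|
      ≤ 14 * c ^ 2 / (N : ℝ) :=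
  stmt_4_general N hN c a ha n
end

section
/- With the sub-Markov semigroup setup below, the following identity holds: Var_{η₀}(Q^Tφ) + p_T·γ_T(φ²) − γ₀((Q^Tφ)²) + (γ_T(φ))²·log p_T + 2∫_{(0,T]} γ_t((Q^{T−t}φ)²) dμ(t) = p_T²·Var_{η_T}(φ) − p_T²·(log p_T)·(η_T(φ))² + 2∫_{(0,T]} Var_{η_t}(Q^{T−t}φ)·p_t dμ(t). -/
open MeasureTheory ProbabilityTheory Set Filter
open scoped ENNReal Topology

/-- Action of a kernel on a real test function: `κf(x) = ∫ f(y) κ(x,dy)`. -/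
noncomputable def kapply {E : Type*} [MeasurableSpace E]
    (κ : ProbabilityTheory.Kernel E E) (f : E → ℝ) (x : E) : ℝ :=
  ∫ y, f y ∂(κ x)

/-- The unnormalized measure `γ_t(ψ) = ∫ Q^t ψ dη₀`. -/
noncomputable def gammaMeas {E : Type*} [MeasurableSpace E]
    (Q : ℝ → ProbabilityTheory.Kernel E E) (η₀ : Measure E) (t : ℝ) (ψ : E → ℝ) : ℝ :=
  ∫ x, kapply (Q t) ψ x ∂η₀

/-- The survival probability `p_t = γ_t(1)`. -/
noncomputable def pFun {E : Type*} [MeasurableSpace E]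
    (Q : ℝ → ProbabilityTheory.Kernel E E) (η₀ : Measure E) (t : ℝ) : ℝ :=
  gammaMeas Q η₀ t fun _ => 1

/-- The normalized measure `η_t(ψ) = γ_t(ψ) / p_t`. -/
noncomputable def etaMeas {E : Type*} [MeasurableSpace E]
    (Q : ℝ → ProbabilityTheory.Kernel E E) (η₀ : Measure E) (t : ℝ) (ψ : E → ℝ) : ℝ :=
  gammaMeas Q η₀ t ψ / pFun Q η₀ t

/-- The variance `Var_{η_t}(ψ) = η_t(ψ²) − (η_t ψ)²`. -/
noncomputable def etaVar {E : Type*} [MeasurableSpace E]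
    (Q : ℝ → ProbabilityTheory.Kernel E E) (η₀ : Measure E) (t : ℝ) (ψ : E → ℝ) : ℝ :=
  etaMeas Q η₀ t (fun x => (ψ x) ^ 2) - (etaMeas Q η₀ t ψ) ^ 2

/-!
The semigroup property gives `γ_t(Q^{T-t}φ) = γ_T(φ)`, hence
`Var_{η_t}(Q^{T-t}φ) p_t = γ_t((Q^{T-t}φ)²) - γ_T(φ)² / p_t`, and the identity becomes algebra
once we know `∫_{(0,T]} p_t⁻¹ dμ(t) = -log p_T`, i.e. the substitution `u = p_t` in `∫ du / u`.
For that, on an interval `(s, t]` both `∫ p⁻¹ dμ` and `log p_s - log p_t` lie between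
`(p_s - p_t) / p_s` and `(p_s - p_t) / p_t`, so they differ by at most `(p_s - p_t)² / p_T²`;
summed over a fine partition these errors are `o(1)` because `p` is uniformly continuous.
-/

theorem abs_sub_le_of_abs_sub_le_mul_sq {P G : ℝ → ℝ} {a b C ε : ℝ} (hab : a ≤ b) (hC : 0 ≤ C)
    (hε : 0 < ε) (hP : ContinuousOn P (Icc a b)) (hanti : AntitoneOn P (Icc a b))
    (hG : ∀ s t, a ≤ s → s ≤ t → t ≤ b → |G t - G s| ≤ C * (P s - P t) ^ 2) :
    |G b - G a| ≤ C * ε * (P a - P b) := by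
  obtain ⟨δ, hδ, hPδ⟩ := Metric.uniformContinuousOn_iff.mp
    (isCompact_Icc.uniformContinuousOn_of_continuous hP) ε hε
  obtain ⟨n, hn⟩ := exists_nat_gt ((b - a) / δ)
  have hn0 : (0 : ℝ) < n := (div_nonneg (sub_nonneg.2 hab) hδ.le).trans_lt hn
  have hwidth : 0 ≤ (b - a) / n := div_nonneg (sub_nonneg.2 hab) hn0.le
  set t : ℕ → ℝ := fun i => a + i * ((b - a) / n) with ht
  have ht0 : t 0 = a := by simp [ht]
  have htn : t n = b := by simp only [ht]; field_simp; ring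
  have hstep : ∀ i, t (i + 1) - t i = (b - a) / n := fun i => by simp only [ht]; push_cast; ring
  have hmono : ∀ i, t i ≤ t (i + 1) := fun i => by linarith [hstep i]
  have hmem : ∀ i ≤ n, t i ∈ Icc a b := fun i hi => by
    have hi' : (i : ℝ) ≤ n := by exact_mod_cast hi
    refine ⟨by simp only [ht]; nlinarith, ?_⟩
    rw [← htn]; simp only [ht]; gcongr
  have hlocal : ∀ i < n, |G (t (i + 1)) - G (t i)| ≤ C * ε * (P (t i) - P (t (i + 1))) := by
    intro i hi
    have hi0 := hmem i hi.le
    have hi1 := hmem (i + 1) hi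
    have hΔ0 : 0 ≤ P (t i) - P (t (i + 1)) := sub_nonneg.2 (hanti hi0 hi1 (hmono i))
    have hΔε : P (t i) - P (t (i + 1)) ≤ ε := by
      have hd : dist (t i) (t (i + 1)) < δ := by
        rw [Real.dist_eq, abs_sub_comm, abs_of_nonneg (sub_nonneg.2 (hmono i)), hstep i,
          div_lt_iff₀ hn0]
        rwa [div_lt_iff₀ hδ, mul_comm] at hn
      exact (le_abs_self _).trans (Real.dist_eq _ _ ▸ hPδ _ hi0 _ hi1 hd).le
    calc |G (t (i + 1)) - G (t i)| ≤ C * (P (t i) - P (t (i + 1))) ^ 2 :=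
          hG _ _ hi0.1 (hmono i) hi1.2
      _ ≤ C * ε * (P (t i) - P (t (i + 1))) := by rw [mul_assoc, sq]; gcongr
  calc |G b - G a| = |∑ i ∈ Finset.range n, (G (t (i + 1)) - G (t i))| := by
        rw [Finset.sum_range_sub (fun i => G (t i)), ht0, htn]
    _ ≤ ∑ i ∈ Finset.range n, |G (t (i + 1)) - G (t i)| := Finset.abs_sum_le_sum_abs _ _
    _ ≤ ∑ i ∈ Finset.range n, C * ε * (P (t i) - P (t (i + 1))) :=
        Finset.sum_le_sum fun i hi => hlocal i (Finset.mem_range.mp hi)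
    _ = C * ε * (P a - P b) := by
        rw [← Finset.mul_sum, Finset.sum_range_sub' (fun i => P (t i)), ht0, htn]

theorem eq_of_abs_sub_le_mul_sq {P G : ℝ → ℝ} {a b C : ℝ} (hab : a ≤ b) (hC : 0 ≤ C)
    (hP : ContinuousOn P (Icc a b)) (hanti : AntitoneOn P (Icc a b))
    (hG : ∀ s t, a ≤ s → s ≤ t → t ≤ b → |G t - G s| ≤ C * (P s - P t) ^ 2) :
    G b = G a := by
  have hlim : Tendsto (fun ε => C * ε * (P a - P b)) (𝓝[>] 0) (𝓝 0) := by
    have : Continuous fun ε : ℝ => C * ε * (P a - P b) := by fun_prop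
    simpa using (this.tendsto 0).mono_left nhdsWithin_le_nhds
  have := ge_of_tendsto hlim (eventually_nhdsWithin_of_forall fun ε hε =>
    abs_sub_le_of_abs_sub_le_mul_sq hab hC hε hP hanti hG)
  exact sub_eq_zero.mp (abs_nonpos_iff.mp this)

theorem Real.log_sub_log_mem_Icc {x y : ℝ} (hy : 0 < y) (hyx : y ≤ x) :
    Real.log x - Real.log y ∈ Icc ((x - y) / x) ((x - y) / y) := by
  have hx := hy.trans_le hyx
  rw [← Real.log_div hx.ne' hy.ne']
  constructor
  · have := Real.one_sub_inv_le_log_of_pos (div_pos hx hy)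
    rwa [inv_div, one_sub_div hx.ne'] at this
  · have := Real.log_le_sub_one_of_pos (div_pos hx hy)
    rwa [div_sub_one hy.ne'] at this

section StieltjesLog

variable {P : ℝ → ℝ} {μ : Measure ℝ} {a b : ℝ}

theorem integrableOn_Ioc_of_measurable_restrict_Icc {F : ℝ → ℝ} {M : ℝ}
    (hF : Measurable ((Icc a b).domRestrict F)) (hFM : ∀ t ∈ Ioc a b, |F t| ≤ M)
    (hμ : μ (Ioc a b) ≠ ∞) : IntegrableOn F (Ioc a b) μ := by
  have := isFiniteMeasure_restrict.2 hμ
  refine Integrable.of_bound (C := M)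
    ((aemeasurable_restrict_of_measurable_subtype measurableSet_Icc hF).mono_measure
      (Measure.restrict_mono Ioc_subset_Icc_self le_rfl)).aestronglyMeasurable ?_
  exact (ae_restrict_iff' measurableSet_Ioc).2 (ae_of_all _ hFM)

theorem integrableOn_inv_Ioc (hP : ContinuousOn P (Icc a b)) (hanti : AntitoneOn P (Icc a b))
    (hPb : 0 < P b) (hμ : μ (Ioc a b) ≠ ∞) : IntegrableOn (fun t => (P t)⁻¹) (Ioc a b) μ := by
  have : IsFiniteMeasure (μ.restrict (Ioc a b)) := isFiniteMeasure_restrict.2 hμ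
  have hle : ∀ t ∈ Ioc a b, P b ≤ P t := fun t ht =>
    hanti (Ioc_subset_Icc_self ht) ⟨ht.1.le.trans ht.2, le_rfl⟩ ht.2
  refine Integrable.of_bound (C := (P b)⁻¹) ?_ ?_
  · exact ((hP.mono Ioc_subset_Icc_self).inv₀ fun t ht => (hPb.trans_le (hle t ht)).ne')
      |>.aestronglyMeasurable measurableSet_Ioc
  · refine (ae_restrict_iff' measurableSet_Ioc).2 (ae_of_all _ fun t ht => ?_)
    rw [Real.norm_of_nonneg (inv_nonneg.2 (hPb.le.trans (hle t ht)))]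
    exact inv_anti₀ hPb (hle t ht)

theorem setIntegral_inv_mem_Icc (hab : a ≤ b) (hP : ContinuousOn P (Icc a b))
    (hanti : AntitoneOn P (Icc a b)) (hPb : 0 < P b)
    (hμ : μ (Ioc a b) = ENNReal.ofReal (P a - P b)) :
    ∫ t in Ioc a b, (P t)⁻¹ ∂μ ∈ Icc ((P a - P b) / P a) ((P a - P b) / P b) := by
  have hba : P b ≤ P a := hanti ⟨le_rfl, hab⟩ ⟨hab, le_rfl⟩ hab
  have hμfin : μ (Ioc a b) ≠ ∞ := hμ ▸ ENNReal.ofReal_ne_top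
  have hμreal : μ.real (Ioc a b) = P a - P b := by
    rw [measureReal_def, hμ, ENNReal.toReal_ofReal (sub_nonneg.2 hba)]
  have hint := integrableOn_inv_Ioc hP hanti hPb hμfin
  have hmem : ∀ t ∈ Ioc a b, t ∈ Icc a b := fun t ht => Ioc_subset_Icc_self ht
  constructor
  · have := setIntegral_mono_on (integrableOn_const hμfin) hint measurableSet_Ioc fun t ht =>
      inv_anti₀ (hPb.trans_le (hanti (hmem t ht) ⟨hab, le_rfl⟩ ht.2))
        (hanti ⟨le_rfl, hab⟩ (hmem t ht) ht.1.le)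
    rwa [setIntegral_const, hμreal, smul_eq_mul, ← div_eq_mul_inv] at this
  · have := setIntegral_mono_on hint (integrableOn_const hμfin) measurableSet_Ioc fun t ht =>
      inv_anti₀ hPb (hanti (hmem t ht) ⟨hab, le_rfl⟩ ht.2)
    rwa [setIntegral_const, hμreal, smul_eq_mul, ← div_eq_mul_inv] at this

theorem setIntegral_inv_eq_log_sub_log (hab : a ≤ b) (hP : ContinuousOn P (Icc a b))
    (hanti : AntitoneOn P (Icc a b)) (hPb : 0 < P b)
    (hμ : ∀ s t, a ≤ s → s ≤ t → t ≤ b → μ (Ioc s t) = ENNReal.ofReal (P s - P t)) :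
    ∫ t in Ioc a b, (P t)⁻¹ ∂μ = Real.log (P a) - Real.log (P b) := by
  have hle : ∀ {t}, a ≤ t → t ≤ b → P b ≤ P t := fun hat htb =>
    hanti ⟨hat, htb⟩ ⟨hab, le_rfl⟩ htb
  have hint : ∀ s t, a ≤ s → s ≤ t → t ≤ b → IntervalIntegrable (fun u => (P u)⁻¹) μ s t :=
    fun s t has hst htb => (intervalIntegrable_iff_integrableOn_Ioc_of_le hst).2 <|
      integrableOn_inv_Ioc (hP.mono (Icc_subset_Icc has htb))
        (hanti.mono (Icc_subset_Icc has htb)) (hPb.trans_le (hle (has.trans hst) htb))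
        (hμ s t has hst htb ▸ ENNReal.ofReal_ne_top)
  set G : ℝ → ℝ := fun t => (∫ u in a..t, (P u)⁻¹ ∂μ) + Real.log (P t) with hG
  have hGinc : ∀ s t, a ≤ s → s ≤ t → t ≤ b →
      |G t - G s| ≤ (P b ^ 2)⁻¹ * (P s - P t) ^ 2 := by
    intro s t has hst htb
    have hbs := hle has (hst.trans htb)
    have hbt := hle (has.trans hst) htb
    have hPt := hPb.trans_le hbt
    have hPs := hPb.trans_le hbs
    have hdiff : G t - G s
        = (∫ u in Ioc s t, (P u)⁻¹ ∂μ) - (Real.log (P s) - Real.log (P t)) := by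
      rw [hG, ← intervalIntegral.integral_of_le hst,
        ← intervalIntegral.integral_interval_sub_left (hint a t le_rfl (has.trans hst) htb)
          (hint a s le_rfl has (hst.trans htb))]
      ring
    calc |G t - G s| ≤ (P s - P t) / P t - (P s - P t) / P s := by
          rw [hdiff, ← Real.dist_eq]
          exact Real.dist_le_of_mem_Icc
            (setIntegral_inv_mem_Icc hst (hP.mono (Icc_subset_Icc has htb))
              (hanti.mono (Icc_subset_Icc has htb)) hPt (hμ s t has hst htb))
            (Real.log_sub_log_mem_Icc hPt (hanti ⟨has, hst.trans htb⟩ ⟨has.trans hst, htb⟩ hst))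
      _ = (P s - P t) ^ 2 / (P s * P t) := by field_simp
      _ ≤ (P s - P t) ^ 2 / (P b * P b) := by gcongr
      _ = (P b ^ 2)⁻¹ * (P s - P t) ^ 2 := by ring
  have hGab := eq_of_abs_sub_le_mul_sq hab (by positivity) hP hanti hGinc
  rw [hG] at hGab
  simp only [intervalIntegral.integral_same, zero_add] at hGab
  rw [← intervalIntegral.integral_of_le hab]
  linarith

end StieltjesLog

section Kernel

variable {E : Type*} [MeasurableSpace E] {κ : Kernel E E} {f : E → ℝ} {C : ℝ}

theorem isFiniteKernel_of_le_one (hκ : ∀ x, κ x univ ≤ 1) : IsFiniteKernel κ :=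
  ⟨⟨1, ENNReal.one_lt_top, hκ⟩⟩

theorem abs_kapply_le (hκ : ∀ x, κ x univ ≤ 1) (hf : ∀ y, |f y| ≤ C) (x : E) :
    |kapply κ f x| ≤ C := by
  have := isFiniteKernel_of_le_one hκ
  have hC : 0 ≤ C := (abs_nonneg _).trans (hf x)
  calc |kapply κ f x| ≤ C * (κ x).real univ :=
        norm_integral_le_of_norm_le_const
          (ae_of_all _ fun y => (Real.norm_eq_abs _).trans_le (hf y))
    _ ≤ C * 1 := by
        gcongr
        exact ENNReal.toReal_le_of_le_ofReal zero_le_one (by simpa using hκ x)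
    _ = C := mul_one C

theorem measurable_kapply [IsSFiniteKernel κ] (hf : Measurable f) : Measurable (kapply κ f) :=
  (hf.comp measurable_snd).stronglyMeasurable.integral_kernel_prod_right'.measurable

theorem integrable_kapply {η : Measure E} [IsFiniteMeasure η] (hκ : ∀ x, κ x univ ≤ 1)
    (hf : Measurable f) (hfC : ∀ y, |f y| ≤ C) : Integrable (kapply κ f) η :=
  have := isFiniteKernel_of_le_one hκ
  .of_bound (measurable_kapply hf).aestronglyMeasurable C (ae_of_all _ (abs_kapply_le hκ hfC))

end Kernel

section SubMarkov

variable {E : Type*} [MeasurableSpace E] {Q : ℝ → Kernel E E} {η₀ : Measure E}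
  {ψ : E → ℝ} {C s t : ℝ}

theorem gammaMeas_zero
    (hid : ∀ f : E → ℝ, Measurable f → (∃ C, ∀ x, |f x| ≤ C) → kapply (Q 0) f = f)
    (hψ : Measurable ψ) (hψC : ∀ x, |ψ x| ≤ C) : gammaMeas Q η₀ 0 ψ = ∫ x, ψ x ∂η₀ := by
  rw [gammaMeas, hid ψ hψ ⟨C, hψC⟩]

theorem pFun_zero [IsProbabilityMeasure η₀]
    (hid : ∀ f : E → ℝ, Measurable f → (∃ C, ∀ x, |f x| ≤ C) → kapply (Q 0) f = f) :
    pFun Q η₀ 0 = 1 := by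
  rw [pFun, gammaMeas_zero hid measurable_const (C := 1) fun _ => by simp]
  simp

theorem gammaMeas_kapply
    (hsemi : ∀ s t : ℝ, 0 ≤ s → 0 ≤ t → ∀ f : E → ℝ, Measurable f →
        (∃ C, ∀ x, |f x| ≤ C) → kapply (Q (s + t)) f = kapply (Q s) (kapply (Q t) f))
    (hs : 0 ≤ s) (ht : 0 ≤ t) (hψ : Measurable ψ) (hψC : ∀ x, |ψ x| ≤ C) :
    gammaMeas Q η₀ s (kapply (Q t) ψ) = gammaMeas Q η₀ (s + t) ψ := by
  rw [gammaMeas, gammaMeas, hsemi s t hs ht ψ hψ ⟨C, hψC⟩]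

theorem abs_gammaMeas_le [IsProbabilityMeasure η₀] (hQt : ∀ x, Q t x univ ≤ 1)
    (hψC : ∀ x, |ψ x| ≤ C) : |gammaMeas Q η₀ t ψ| ≤ C := by
  simpa [gammaMeas] using norm_integral_le_of_norm_le_const (μ := η₀)
    (ae_of_all _ fun x => (Real.norm_eq_abs _).trans_le (abs_kapply_le hQt hψC x))

theorem pFun_antitoneOn [IsProbabilityMeasure η₀]
    (hsub : ∀ t : ℝ, 0 ≤ t → ∀ x, Q t x univ ≤ 1)
    (hsemi : ∀ s t : ℝ, 0 ≤ s → 0 ≤ t → ∀ f : E → ℝ, Measurable f →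
        (∃ C, ∀ x, |f x| ≤ C) → kapply (Q (s + t)) f = kapply (Q s) (kapply (Q t) f)) :
    AntitoneOn (pFun Q η₀) (Ici 0) := by
  intro s hs t ht hst
  have := isFiniteKernel_of_le_one (hsub s hs)
  have hts : 0 ≤ t - s := sub_nonneg.2 hst
  set g := kapply (Q (t - s)) fun _ => (1 : ℝ)
  have hg : Measurable g :=
    have := isFiniteKernel_of_le_one (hsub _ hts)
    measurable_kapply measurable_const
  have hgC : ∀ y, |g y| ≤ 1 := abs_kapply_le (hsub _ hts) fun _ => by simp
  have hpt : pFun Q η₀ t = gammaMeas Q η₀ s g := by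
    rw [gammaMeas_kapply hsemi hs hts measurable_const (C := 1) fun _ => by simp,
      add_sub_cancel]
    rfl
  rw [hpt, pFun, gammaMeas, gammaMeas]
  refine integral_mono (integrable_kapply (hsub s hs) hg hgC)
    (integrable_kapply (hsub s hs) measurable_const (C := 1) fun _ => by simp) fun x => ?_
  exact integral_mono (.of_bound hg.aestronglyMeasurable 1 (ae_of_all _ hgC))
    (integrable_const 1) fun y => (le_abs_self _).trans (hgC y)

theorem etaVar_mul_pFun (hp : pFun Q η₀ t ≠ 0) :
    etaVar Q η₀ t ψ * pFun Q η₀ t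
      = gammaMeas Q η₀ t (fun x => ψ x ^ 2) - gammaMeas Q η₀ t ψ ^ 2 / pFun Q η₀ t := by
  simp only [etaVar, etaMeas]
  field_simp

end SubMarkov

theorem stmt_7_general {E : Type*} [MeasurableSpace E]
    (Q : ℝ → ProbabilityTheory.Kernel E E)
    (hsub : ∀ t : ℝ, 0 ≤ t → ∀ x, Q t x Set.univ ≤ 1)
    (hid : ∀ f : E → ℝ, Measurable f → (∃ C, ∀ x, |f x| ≤ C) → kapply (Q 0) f = f)
    (hsemi : ∀ s t : ℝ, 0 ≤ s → 0 ≤ t → ∀ f : E → ℝ, Measurable f →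
        (∃ C, ∀ x, |f x| ≤ C) → kapply (Q (s + t)) f = kapply (Q s) (kapply (Q t) f))
    (η₀ : Measure E) [IsProbabilityMeasure η₀]
    (T : ℝ) (hT : 0 < T)
    (hpcont : ContinuousOn (pFun Q η₀) (Set.Icc 0 T))
    (hpT : 0 < pFun Q η₀ T)
    (μ : Measure ℝ)
    (hμ : ∀ s t : ℝ, 0 ≤ s → s ≤ t → t ≤ T →
        μ (Set.Ioc s t) = ENNReal.ofReal (pFun Q η₀ s - pFun Q η₀ t))
    (φ : E → ℝ) (hφ : Measurable φ) (hφb : ∃ C, ∀ x, |φ x| ≤ C)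
    (hmeas : Measurable ((Set.Icc (0 : ℝ) T).restrict
        fun t => gammaMeas Q η₀ t fun x => (kapply (Q (T - t)) φ x) ^ 2)) :
    ((∫ x, (kapply (Q T) φ x) ^ 2 ∂η₀) - (∫ x, kapply (Q T) φ x ∂η₀) ^ 2)
        + pFun Q η₀ T * gammaMeas Q η₀ T (fun x => (φ x) ^ 2)
        - gammaMeas Q η₀ 0 (fun x => (kapply (Q T) φ x) ^ 2)
        + (gammaMeas Q η₀ T φ) ^ 2 * Real.log (pFun Q η₀ T)
        + 2 * ∫ t in Set.Ioc 0 T,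
            gammaMeas Q η₀ t (fun x => (kapply (Q (T - t)) φ x) ^ 2) ∂μ
      = (pFun Q η₀ T) ^ 2 * etaVar Q η₀ T φ
        - (pFun Q η₀ T) ^ 2 * Real.log (pFun Q η₀ T) * (etaMeas Q η₀ T φ) ^ 2
        + 2 * ∫ t in Set.Ioc 0 T,
            etaVar Q η₀ t (kapply (Q (T - t)) φ) * pFun Q η₀ t ∂μ := by
  obtain ⟨C, hφC⟩ := hφb
  have hanti : AntitoneOn (pFun Q η₀) (Icc 0 T) :=
    (pFun_antitoneOn hsub hsemi).mono Icc_subset_Ici_self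
  have hμfin : μ (Ioc 0 T) ≠ ∞ := hμ 0 T le_rfl hT.le le_rfl ▸ ENNReal.ofReal_ne_top
  have hsqC : ∀ t, 0 ≤ t → ∀ x, |kapply (Q t) φ x ^ 2| ≤ C ^ 2 := fun t ht x => by
    rw [abs_pow]
    exact pow_le_pow_left₀ (abs_nonneg _) (abs_kapply_le (hsub t ht) hφC x) 2
  have hγ0 : gammaMeas Q η₀ 0 (fun x => kapply (Q T) φ x ^ 2)
      = ∫ x, kapply (Q T) φ x ^ 2 ∂η₀ :=
    have := isFiniteKernel_of_le_one (hsub T hT.le)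
    gammaMeas_zero hid ((measurable_kapply hφ).pow_const 2) (hsqC T hT.le)
  have hlog : ∫ t in Ioc 0 T, (pFun Q η₀ t)⁻¹ ∂μ = -Real.log (pFun Q η₀ T) := by
    rw [setIntegral_inv_eq_log_sub_log hT.le hpcont hanti hpT hμ, pFun_zero hid, Real.log_one,
      zero_sub]
  have hγint := integrableOn_Ioc_of_measurable_restrict_Icc (μ := μ) hmeas (fun t ht =>
    abs_gammaMeas_le (hsub t ht.1.le) (hsqC (T - t) (sub_nonneg.2 ht.2))) hμfin
  have hvar : ∫ t in Ioc 0 T, etaVar Q η₀ t (kapply (Q (T - t)) φ) * pFun Q η₀ t ∂μ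
      = (∫ t in Ioc 0 T, gammaMeas Q η₀ t fun x => kapply (Q (T - t)) φ x ^ 2 ∂μ)
        - gammaMeas Q η₀ T φ ^ 2 * ∫ t in Ioc 0 T, (pFun Q η₀ t)⁻¹ ∂μ := by
    rw [← integral_const_mul, ← integral_sub hγint ((integrableOn_inv_Ioc hpcont hanti hpT
      hμfin).const_mul _)]
    refine setIntegral_congr_fun measurableSet_Ioc fun t ht => ?_
    have hpt := hpT.trans_le (hanti (Ioc_subset_Icc_self ht) ⟨hT.le, le_rfl⟩ ht.2)
    rw [etaVar_mul_pFun hpt.ne',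
      gammaMeas_kapply hsemi ht.1.le (sub_nonneg.2 ht.2) hφ hφC, add_sub_cancel, div_eq_mul_inv]
  rw [hγ0, hvar, hlog]
  simp only [etaVar, etaMeas, gammaMeas]
  field_simp
  ring

/-- The two formulations of the asymptotic variance `σ_T²(φ)` agree:
`Var_{η₀}(Q^Tφ) + p_T γ_T(φ²) − γ₀((Q^Tφ)²) + (γ_T φ)² log p_T + 2 ∫_{(0,T]} γ_t((Q^{T−t}φ)²) dμ
  = p_T² Var_{η_T}(φ) − p_T² log p_T (η_T φ)² + 2 ∫_{(0,T]} Var_{η_t}(Q^{T−t}φ) p_t dμ`. -/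
theorem stmt_7 {E : Type*} [MeasurableSpace E]
    (Q : ℝ → ProbabilityTheory.Kernel E E)
    (hsub : ∀ t : ℝ, 0 ≤ t → ∀ x, Q t x Set.univ ≤ 1)
    (hid : ∀ f : E → ℝ, Measurable f → (∃ C, ∀ x, |f x| ≤ C) → kapply (Q 0) f = f)
    (hsemi : ∀ s t : ℝ, 0 ≤ s → 0 ≤ t → ∀ f : E → ℝ, Measurable f →
        (∃ C, ∀ x, |f x| ≤ C) → kapply (Q (s + t)) f = kapply (Q s) (kapply (Q t) f))
    (η₀ : Measure E) [IsProbabilityMeasure η₀]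
    (T : ℝ) (hT : 0 < T)
    (hpcont : ContinuousOn (pFun Q η₀) (Set.Icc 0 T))
    (hpT : 0 < pFun Q η₀ T)
    (μ : Measure ℝ) (hsupp : μ (Set.Ioc 0 T)ᶜ = 0)
    (hμ : ∀ s t : ℝ, 0 ≤ s → s ≤ t → t ≤ T →
        μ (Set.Ioc s t) = ENNReal.ofReal (pFun Q η₀ s - pFun Q η₀ t))
    (φ : E → ℝ) (hφ : Measurable φ) (hφb : ∃ C, ∀ x, |φ x| ≤ C)
    (hmeas : Measurable ((Set.Icc (0 : ℝ) T).restrict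
        fun t => gammaMeas Q η₀ t fun x => (kapply (Q (T - t)) φ x) ^ 2)) :
    ((∫ x, (kapply (Q T) φ x) ^ 2 ∂η₀) - (∫ x, kapply (Q T) φ x ∂η₀) ^ 2)
        + pFun Q η₀ T * gammaMeas Q η₀ T (fun x => (φ x) ^ 2)
        - gammaMeas Q η₀ 0 (fun x => (kapply (Q T) φ x) ^ 2)
        + (gammaMeas Q η₀ T φ) ^ 2 * Real.log (pFun Q η₀ T)
        + 2 * ∫ t in Set.Ioc 0 T,
            gammaMeas Q η₀ t (fun x => (kapply (Q (T - t)) φ x) ^ 2) ∂μ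
      = (pFun Q η₀ T) ^ 2 * etaVar Q η₀ T φ
        - (pFun Q η₀ T) ^ 2 * Real.log (pFun Q η₀ T) * (etaMeas Q η₀ T φ) ^ 2
        + 2 * ∫ t in Set.Ioc 0 T,
            etaVar Q η₀ t (kapply (Q (T - t)) φ) * pFun Q η₀ t ∂μ :=
  stmt_7_general Q hsub hid hsemi η₀ T hT hpcont hpT μ hμ φ hφ hφb hmeas
end

section
/- Let (E, d) be a proper metric space (every closed bounded set is compact) and B ⊆ E. For a càdlàg path z : [0,∞) → E (right-continuous with left limits) define t̄_B(z) := inf{t ≥ 0 : z_{t⁻} ∈ cl(B) or z_t ∈ cl(B)} ∈ [0,∞], where z_{t⁻} denotes the left limit at t (with z_{0⁻} := z_0) and cl(B) the closure of B. Let z and z^1, z^2, … be càdlàg paths, and suppose there exist increasing bijections λ^n : [0,∞) → [0,∞) such that for every t₀ > 0, sup_{0≤t≤t₀} d(z^n_{λ^n(t)}, z_t) → 0 and sup_{0≤t≤t₀} |λ^n(t) − t| → 0 as n → ∞. Then t̄_B(z) ≤ liminf_n t̄_B(z^n). -/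
/-!
On `[0, A]` with `A` before the hitting time of `z`, the path `z` stays at a positive distance
`c` from `B`: near each time, right-continuity and the left limit keep `z` off `cl B`, and
compactness of `[0, A]` makes the bound uniform. If `z^n` hits `cl B` at a time `t < r < A`, then
through its left limit `z^n` comes within `δ` of `B` at some time `s ≤ t`; for large `n` the
time change pulls `s` back into `[0, A]`, where `z` is within `δ` of `z^n ∘ λ^n`, so `z` comes
within `2δ < c` of `B`.
-/

open Filter Set Topology
open scoped ENNReal NNReal

/-- The hitting time of the closure of `B` by a path `z` together with its left-limit path `zm`:
`t̄_B(z) = inf {t ≥ 0 : z_{t⁻} ∈ cl(B) or z_t ∈ cl(B)}`, with value `∞` if never hit. -/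
noncomputable def hitClosure {E : Type*} [MetricSpace E] (B : Set E)
    (z zm : ℝ≥0 → E) : ℝ≥0∞ :=
  ⨅ t ∈ {t : ℝ≥0 | zm t ∈ closure B ∨ z t ∈ closure B}, (t : ℝ≥0∞)

open Metric

theorem IsCompact.exists_lt_forall_le_of_eventually {X α : Type*} [TopologicalSpace X]
    [LinearOrder α] {s : Set X} (hs : IsCompact s) {f : X → α} {a : α} (ha : ¬IsMax a)
    (h : ∀ x ∈ s, ∃ c, a < c ∧ ∀ᶠ y in 𝓝[s] x, c ≤ f y) :
    ∃ c, a < c ∧ ∀ x ∈ s, c ≤ f x := by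
  refine hs.induction_on (p := fun t => ∃ c, a < c ∧ ∀ x ∈ t, c ≤ f x) ?_ ?_ ?_ ?_
  · obtain ⟨c, hac⟩ := not_isMax_iff.1 ha
    exact ⟨c, hac, fun _ => False.elim⟩
  · rintro t u htu ⟨c, hac, hc⟩
    exact ⟨c, hac, fun x hx => hc x (htu hx)⟩
  · rintro t u ⟨c, hac, hc⟩ ⟨d, had, hd⟩
    refine ⟨min c d, lt_min hac had, ?_⟩
    rintro x (hx | hx)
    · exact (min_le_left c d).trans (hc x hx)
    · exact (min_le_right c d).trans (hd x hx)
  · intro x hx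
    obtain ⟨c, hac, hc⟩ := h x hx
    exact ⟨{y | c ≤ f y}, hc, c, hac, fun _ hy => hy⟩

theorem exists_pos_eventually_le_infEDist {X E : Type*} [TopologicalSpace X] [LinearOrder X]
    [PseudoEMetricSpace E] {B : Set E} {z : X → E} {x : X} {y : E}
    (hr : ContinuousWithinAt z (Ici x) x) (hl : Tendsto z (𝓝[<] x) (𝓝 y))
    (hx : z x ∉ closure B) (hy : y ∉ closure B) :
    ∃ c > 0, ∀ᶠ t in 𝓝 x, c ≤ infEDist (z t) B := by
  rw [← infEDist_pos_iff_notMem_closure] at hx hy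
  obtain ⟨c, hc0, hc⟩ := exists_between (lt_min hy hx)
  refine ⟨c, hc0, ?_⟩
  rw [← nhdsLT_sup_nhdsGE, eventually_sup]
  constructor
  · exact (((continuous_infEDist.tendsto y).comp hl).eventually_const_lt
      (hc.trans_le (min_le_left _ _))).mono fun _ => le_of_lt
  · exact (((continuous_infEDist.tendsto (z x)).comp hr).eventually_const_lt
      (hc.trans_le (min_le_right _ _))).mono fun _ => le_of_lt

theorem exists_le_infEDist_lt_of_hit {E : Type*} [PseudoEMetricSpace E] {B : Set E}
    {w wm : ℝ≥0 → E} (hwm0 : wm 0 = w 0)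
    (hwm : ∀ t : ℝ≥0, 0 < t → Tendsto w (𝓝[<] t) (𝓝 (wm t)))
    {t : ℝ≥0} (ht : wm t ∈ closure B ∨ w t ∈ closure B) {ε : ℝ≥0∞} (hε : 0 < ε) :
    ∃ s ≤ t, infEDist (w s) B < ε := by
  simp only [mem_closure_iff_infEDist_zero] at ht
  rcases ht with ht | ht
  · rcases eq_zero_or_pos t with rfl | ht0
    · exact ⟨0, le_rfl, by rwa [← hwm0, ht]⟩
    · have : (𝓝[<] t).NeBot := nhdsLT_neBot_of_exists_lt ⟨0, ht0⟩
      have hnear := ((continuous_infEDist.tendsto _).comp (hwm t ht0)).eventually_lt_const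
        (ht ▸ hε)
      obtain ⟨s, hs, hst⟩ := (hnear.and self_mem_nhdsWithin).exists
      exact ⟨s, hst.le, hs⟩
  · exact ⟨t, le_rfl, ht ▸ hε⟩

theorem notMem_closure_of_lt_hitClosure {E : Type*} [MetricSpace E] {B : Set E}
    {z zm : ℝ≥0 → E} {t : ℝ≥0} (ht : (t : ℝ≥0∞) < hitClosure B z zm) :
    zm t ∉ closure B ∧ z t ∉ closure B := by
  rw [← not_or]
  exact fun hit => ht.not_ge (iInf₂_le t hit)

theorem exists_pos_forall_le_infEDist_of_lt_hitClosure {E : Type*} [MetricSpace E] {B : Set E}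
    {z zm : ℝ≥0 → E} (hz_rc : ∀ t : ℝ≥0, ContinuousWithinAt z (Ici t) t)
    (hzm : ∀ t : ℝ≥0, 0 < t → Tendsto z (𝓝[<] t) (𝓝 (zm t)))
    {A : ℝ≥0} (hA : (A : ℝ≥0∞) < hitClosure B z zm) :
    ∃ c > 0, ∀ t ≤ A, c ≤ infEDist (z t) B := by
  refine (Icc_bot (a := A) ▸ isCompact_Icc).exists_lt_forall_le_of_eventually
    (not_isMax_iff.2 ⟨1, one_pos⟩) fun t ht => ?_
  obtain ⟨hzm_t, hz_t⟩ := notMem_closure_of_lt_hitClosure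
    ((ENNReal.coe_le_coe.2 ht).trans_lt hA)
  have hl : Tendsto z (𝓝[<] t) (𝓝 (zm t)) := by
    rcases eq_zero_or_pos t with rfl | ht0
    · rw [Iio_eq_empty_iff.2 (isBot_zero (α := ℝ≥0)).isMin, nhdsWithin_empty]
      exact tendsto_bot
    · exact hzm t ht0
  obtain ⟨c, hc0, hc⟩ := exists_pos_eventually_le_infEDist (hz_rc t) hl hz_t hzm_t
  exact ⟨c, hc0, hc.filter_mono nhdsWithin_le_nhds⟩

theorem eventually_coe_le_hitClosure_of_skorokhod {E : Type*} [MetricSpace E] {B : Set E}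
    {z zm : ℝ≥0 → E} {zn znm : ℕ → ℝ≥0 → E}
    (hz_rc : ∀ t : ℝ≥0, ContinuousWithinAt z (Ici t) t)
    (hzm : ∀ t : ℝ≥0, 0 < t → Tendsto z (𝓝[<] t) (𝓝 (zm t)))
    (hznm0 : ∀ n, znm n 0 = zn n 0)
    (hznm : ∀ (n : ℕ) (t : ℝ≥0), 0 < t → Tendsto (zn n) (𝓝[<] t) (𝓝 (znm n t)))
    {lam : ℕ → ℝ≥0 → ℝ≥0} (hlam_mono : ∀ n, Monotone (lam n))
    (hlam_surj : ∀ n, Function.Surjective (lam n))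
    (hconv : ∀ t₀ : ℝ≥0, ∀ ε : ℝ, 0 < ε → ∃ N : ℕ, ∀ n ≥ N, ∀ t ≤ t₀,
        dist (zn n (lam n t)) (z t) < ε ∧ dist (lam n t) t < ε)
    {r : ℝ≥0} (hr : (r : ℝ≥0∞) < hitClosure B z zm) :
    ∀ᶠ n in atTop, (r : ℝ≥0∞) ≤ hitClosure B (zn n) (znm n) := by
  obtain ⟨A, hrA, hA⟩ := ENNReal.lt_iff_exists_nnreal_btwn.1 hr
  obtain ⟨c, hc0, hc⟩ := exists_pos_forall_le_infEDist_of_lt_hitClosure hz_rc hzm hA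
  obtain ⟨δ₁, -, hδ₁0, hδ₁c⟩ := ENNReal.lt_iff_exists_real_btwn.1 (ENNReal.half_pos hc0.ne')
  rw [ENNReal.coe_lt_coe, ← NNReal.coe_lt_coe] at hrA
  -- `δ ≤ A - r` keeps the time change of `[0, A]` beyond `r`, `2 δ < c` keeps `z` away from `B`
  set δ := min δ₁ ((A : ℝ) - r)
  have hδ : 0 < δ := lt_min (ENNReal.ofReal_pos.1 hδ₁0) (sub_pos.2 hrA)
  have hδc : ENNReal.ofReal δ + ENNReal.ofReal δ ≤ c := calc
    _ ≤ c / 2 + c / 2 := by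
      gcongr <;> exact (ENNReal.ofReal_le_ofReal (min_le_left _ _)).trans hδ₁c.le
    _ = c := ENNReal.add_halves c
  obtain ⟨N, hN⟩ := hconv A δ hδ
  filter_upwards [eventually_ge_atTop N] with n hn
  refine le_iInf₂ fun t hit => ?_
  by_contra! htr
  rw [ENNReal.coe_lt_coe, ← NNReal.coe_lt_coe] at htr
  obtain ⟨s, hst, hs⟩ := exists_le_infEDist_lt_of_hit (hznm0 n) (hznm n) hit
    (ENNReal.ofReal_pos.2 hδ)
  have hsA : s < lam n A := by
    have hlamA := (hN n hn A le_rfl).2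
    rw [NNReal.dist_eq, abs_lt] at hlamA
    rw [← NNReal.coe_le_coe] at hst
    rw [← NNReal.coe_lt_coe]
    linarith [min_le_right δ₁ ((A : ℝ) - r)]
  obtain ⟨u, rfl⟩ := hlam_surj n s
  have huA : u ≤ A := ((hlam_mono n).reflect_lt hsA).le
  have hzu : infEDist (z u) B < c := calc
    infEDist (z u) B ≤ infEDist (zn n (lam n u)) B + edist (z u) (zn n (lam n u)) :=
      infEDist_le_infEDist_add_edist
    _ < ENNReal.ofReal δ + ENNReal.ofReal δ :=
      ENNReal.add_lt_add hs (by rw [edist_comm, edist_lt_ofReal]; exact (hN n hn u huA).1)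
    _ ≤ c := hδc
  exact (hc u huA).not_gt hzu

theorem stmt_14_general {E : Type*} [MetricSpace E] (B : Set E)
    (z zm : ℝ≥0 → E) (zn znm : ℕ → ℝ≥0 → E)
    (hz_rc : ∀ t : ℝ≥0, ContinuousWithinAt z (Set.Ici t) t)
    (hzm : ∀ t : ℝ≥0, 0 < t → Tendsto z (𝓝[<] t) (𝓝 (zm t)))
    (hznm0 : ∀ n, znm n 0 = zn n 0)
    (hznm : ∀ (n : ℕ) (t : ℝ≥0), 0 < t → Tendsto (zn n) (𝓝[<] t) (𝓝 (znm n t)))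
    (lam : ℕ → ℝ≥0 → ℝ≥0)
    (hlam_mono : ∀ n, StrictMono (lam n))
    (hlam_bij : ∀ n, Function.Bijective (lam n))
    (hconv : ∀ t₀ : ℝ≥0, ∀ ε : ℝ, 0 < ε → ∃ N : ℕ, ∀ n ≥ N, ∀ t ≤ t₀,
        dist (zn n (lam n t)) (z t) < ε ∧ dist (lam n t) t < ε) :
    hitClosure B z zm ≤ Filter.liminf (fun n => hitClosure B (zn n) (znm n)) Filter.atTop :=
  ENNReal.le_of_forall_nnreal_lt fun _ hr => le_liminf_of_le (by isBoundedDefault) <|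
    eventually_coe_le_hitClosure_of_skorokhod hz_rc hzm hznm0 hznm
      (fun n => (hlam_mono n).monotone) (fun n => (hlam_bij n).2) hconv hr

/-- Lower semicontinuity of the closure hitting time along Skorokhod `J1`
convergence, in a proper metric space: if the càdlàg paths `z^n` (with left-limit paths
`znm n`) converge to the càdlàg path `z` (with left-limit path `zm`) in the `J1` sense
(via time changes `λ^n`), then `t̄_B(z) ≤ liminf_n t̄_B(z^n)`. -/
theorem stmt_14 {E : Type*} [MetricSpace E] [ProperSpace E] (B : Set E)
    (z zm : ℝ≥0 → E) (zn znm : ℕ → ℝ≥0 → E)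
    (hz_rc : ∀ t : ℝ≥0, ContinuousWithinAt z (Set.Ici t) t)
    (hzm0 : zm 0 = z 0)
    (hzm : ∀ t : ℝ≥0, 0 < t → Tendsto z (𝓝[<] t) (𝓝 (zm t)))
    (hzn_rc : ∀ (n : ℕ) (t : ℝ≥0), ContinuousWithinAt (zn n) (Set.Ici t) t)
    (hznm0 : ∀ n, znm n 0 = zn n 0)
    (hznm : ∀ (n : ℕ) (t : ℝ≥0), 0 < t → Tendsto (zn n) (𝓝[<] t) (𝓝 (znm n t)))
    (lam : ℕ → ℝ≥0 → ℝ≥0)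
    (hlam_mono : ∀ n, StrictMono (lam n))
    (hlam_bij : ∀ n, Function.Bijective (lam n))
    (hconv : ∀ t₀ : ℝ≥0, ∀ ε : ℝ, 0 < ε → ∃ N : ℕ, ∀ n ≥ N, ∀ t ≤ t₀,
        dist (zn n (lam n t)) (z t) < ε ∧ dist (lam n t) t < ε) :
    hitClosure B z zm ≤ Filter.liminf (fun n => hitClosure B (zn n) (znm n)) Filter.atTop :=
  stmt_14_general B z zm zn znm hz_rc hzm hznm0 hznm lam hlam_mono hlam_bij hconv
end

section
/- Let S and S' be Polish spaces (separable, completely metrizable), and for each n let (U_n, V_n) be a random element of S × S' on some probability space. Let μ₀ be a probability measure on S and ν a probability measure on S'. Assume that for every bounded continuous ψ : S → ℝ and every bounded continuous F : S' → ℝ, E[e^{ψ(U_n)} F(V_n)] → (∫_S e^{ψ} dμ₀)·(∫_{S'} F dν) as n → ∞. Then the law of (U_n, V_n) converges weakly to the product measure μ₀ ⊗ ν on S × S'. -/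
/-!
Write `ρₙ` for the law of `(Uₙ, Vₙ)`. Choosing `ψ = log (g + ‖g‖ + 1)` and `ψ = 0` in the
hypothesis and subtracting shows `∫ g(x) F(y) dρₙ → μ₀(g) ν(F)` for all bounded continuous
`g`, `F`. Taking `F = 1` or `g = 1`, both marginals of `ρₙ` converge weakly, hence are tight, so
`(ρₙ)` is tight and, by Prokhorov's theorem, lies in a compact set. Every cluster point `ρ`
satisfies `∫ g(x) F(y) dρ = μ₀(g) ν(F)`; these integrals determine a measure on `S × S'`, so
`ρ = μ₀ ⊗ ν`, and a sequence in a compact set with a unique cluster point converges to it.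
-/

open MeasureTheory Filter Set
open scoped Topology BoundedContinuousFunction

lemma BoundedContinuousFunction.exists_exp_eq_add_norm_add_one {X : Type*} [TopologicalSpace X]
    (g : X →ᵇ ℝ) : ∃ ψ : X →ᵇ ℝ, ∀ x, Real.exp (ψ x) = g x + (‖g‖ + 1) := by
  have hbound (x : X) : 1 ≤ g x + (‖g‖ + 1) ∧ g x + (‖g‖ + 1) ≤ 2 * ‖g‖ + 1 := by
    have := abs_le.1 ((Real.norm_eq_abs _).symm.trans_le (g.norm_coe_le_norm x))
    constructor <;> linarith
  have hpos (x : X) : 0 < g x + (‖g‖ + 1) := one_pos.trans_le (hbound x).1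
  refine ⟨.ofNormedAddCommGroup (fun x ↦ Real.log (g x + (‖g‖ + 1)))
    ((g.continuous.add continuous_const).log fun x ↦ (hpos x).ne') (2 * ‖g‖) fun x ↦ ?_,
    fun x ↦ Real.exp_log (hpos x)⟩
  rw [Real.norm_of_nonneg (Real.log_nonneg (hbound x).1)]
  linarith [Real.log_le_sub_one_of_pos (hpos x), (hbound x).2]

section Product

variable {X Y : Type*} [TopologicalSpace X] [MeasurableSpace X] [TopologicalSpace Y]
  [MeasurableSpace Y]

lemma MeasureTheory.Integrable.mul_comp_fst_snd [OpensMeasurableSpace X] [OpensMeasurableSpace Y]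
    (ρ : Measure (X × Y)) [IsFiniteMeasure ρ]
    (f : X →ᵇ ℝ) (g : Y →ᵇ ℝ) : Integrable (fun p ↦ f p.1 * g p.2) ρ :=
  ((g.integrable (ρ.map Prod.snd)).comp_measurable measurable_snd).bdd_mul
    (f.continuous.measurable.comp measurable_fst).aestronglyMeasurable
    (.of_forall fun p ↦ f.norm_coe_le_norm p.1)

lemma tendsto_integral_mul_of_tendsto_integral_exp_mul [OpensMeasurableSpace X]
    [OpensMeasurableSpace Y] {ι : Type*} {l : Filter ι}
    {ρ : ι → Measure (X × Y)} [∀ i, IsFiniteMeasure (ρ i)]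
    {μ : Measure X} [IsProbabilityMeasure μ] {ν : Measure Y}
    (h : ∀ (ψ : X →ᵇ ℝ) (F : Y →ᵇ ℝ),
      Tendsto (fun i ↦ ∫ p, Real.exp (ψ p.1) * F p.2 ∂(ρ i)) l
        (𝓝 ((∫ x, Real.exp (ψ x) ∂μ) * ∫ y, F y ∂ν)))
    (g : X →ᵇ ℝ) (F : Y →ᵇ ℝ) :
    Tendsto (fun i ↦ ∫ p, g p.1 * F p.2 ∂(ρ i)) l
      (𝓝 ((∫ x, g x ∂μ) * ∫ y, F y ∂ν)) := by
  obtain ⟨ψ, hψ⟩ := g.exists_exp_eq_add_norm_add_one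
  set c := ‖g‖ + 1
  have hsplit (i : ι) : ∫ p, g p.1 * F p.2 ∂(ρ i) =
      ∫ p, Real.exp (ψ p.1) * F p.2 ∂(ρ i) -
        c * ∫ p, Real.exp ((0 : X →ᵇ ℝ) p.1) * F p.2 ∂(ρ i) := by
    have hconst : Integrable (fun p : X × Y ↦ c * F p.2) (ρ i) := by
      simpa using Integrable.mul_comp_fst_snd (ρ i) (.const X c) F
    simp only [hψ, BoundedContinuousFunction.coe_zero, Pi.zero_apply, Real.exp_zero, one_mul,
      add_mul]
    rw [integral_add (Integrable.mul_comp_fst_snd (ρ i) g F) hconst, integral_const_mul]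
    ring
  have hlim : (∫ x, g x ∂μ) * ∫ y, F y ∂ν =
      (∫ x, Real.exp (ψ x) ∂μ) * (∫ y, F y ∂ν) -
        c * ((∫ x, Real.exp ((0 : X →ᵇ ℝ) x) ∂μ) * ∫ y, F y ∂ν) := by
    simp only [hψ, BoundedContinuousFunction.coe_zero, Pi.zero_apply, Real.exp_zero,
      integral_const, integral_add (g.integrable μ) (integrable_const c), probReal_univ,
      smul_eq_mul, one_mul]
    ring
  simpa only [hsplit, hlim] using (h ψ F).sub ((h 0 F).const_mul c)

namespace MeasureTheory.ProbabilityMeasure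

variable {ι : Type*} {l : Filter ι} {μ : ProbabilityMeasure X} {ν : ProbabilityMeasure Y}

lemma tendsto_map_fst_of_tendsto_integral_mul [OpensMeasurableSpace X]
    {ρ : ι → ProbabilityMeasure (X × Y)}
    (h : ∀ (f : X →ᵇ ℝ) (g : Y →ᵇ ℝ),
      Tendsto (fun i ↦ ∫ p, f p.1 * g p.2 ∂(ρ i : Measure (X × Y))) l
        (𝓝 ((∫ x, f x ∂(μ : Measure X)) * ∫ y, g y ∂(ν : Measure Y)))) :
    Tendsto (fun i ↦ (ρ i).map measurable_fst.aemeasurable) l (𝓝 μ) := by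
  refine tendsto_iff_forall_integral_tendsto.2 fun f ↦ ?_
  simpa [integral_map measurable_fst.aemeasurable f.continuous.aestronglyMeasurable]
    using h f 1

lemma tendsto_map_snd_of_tendsto_integral_mul [OpensMeasurableSpace Y]
    {ρ : ι → ProbabilityMeasure (X × Y)}
    (h : ∀ (f : X →ᵇ ℝ) (g : Y →ᵇ ℝ),
      Tendsto (fun i ↦ ∫ p, f p.1 * g p.2 ∂(ρ i : Measure (X × Y))) l
        (𝓝 ((∫ x, f x ∂(μ : Measure X)) * ∫ y, g y ∂(ν : Measure Y)))) :
    Tendsto (fun i ↦ (ρ i).map measurable_snd.aemeasurable) l (𝓝 ν) := by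
  refine tendsto_iff_forall_integral_tendsto.2 fun g ↦ ?_
  simpa [integral_map measurable_snd.aemeasurable g.continuous.aestronglyMeasurable]
    using h 1 g

lemma isTightMeasureSet_range_of_tendsto [PolishSpace X] [BorelSpace X]
    {μs : ℕ → ProbabilityMeasure X} (h : Tendsto μs atTop (𝓝 μ)) :
    IsTightMeasureSet (range fun n ↦ (μs n : Measure X)) := by
  let := TopologicalSpace.upgradeIsCompletelyMetrizable X
  refine (isTightMeasureSet_of_isCompact_closure h.isCompact_insert_range.closure).subset ?_
  exact range_subset_iff.2 fun n ↦ ⟨μs n, mem_insert_of_mem _ (mem_range_self n), rfl⟩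

lemma tendsto_prod_of_tendsto_integral_mul [PolishSpace X] [BorelSpace X] [PolishSpace Y]
    [BorelSpace Y] {ρ : ℕ → ProbabilityMeasure (X × Y)}
    (h : ∀ (f : X →ᵇ ℝ) (g : Y →ᵇ ℝ),
      Tendsto (fun n ↦ ∫ p, f p.1 * g p.2 ∂(ρ n : Measure (X × Y))) atTop
        (𝓝 ((∫ x, f x ∂(μ : Measure X)) * ∫ y, g y ∂(ν : Measure Y)))) :
    Tendsto ρ atTop (𝓝 (μ.prod ν)) := by
  have htight : IsTightMeasureSet (range fun n ↦ (ρ n : Measure (X × Y))) := by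
    refine .prodMk ?_ ?_
    · simpa [← range_comp, Function.comp_def, Measure.fst] using
        isTightMeasureSet_range_of_tendsto (tendsto_map_fst_of_tendsto_integral_mul h)
    · simpa [← range_comp, Function.comp_def, Measure.snd] using
        isTightMeasureSet_range_of_tendsto (tendsto_map_snd_of_tendsto_integral_mul h)
  have hcompact : IsCompact (closure (range ρ)) :=
    isCompact_closure_of_isTightMeasureSet (by simpa [range] using htight)
  refine hcompact.tendsto_nhds_of_unique_mapClusterPt
    (.of_forall fun n ↦ subset_closure (mem_range_self n)) fun ρ' _ hρ' ↦ ?_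
  refine toMeasure_injective (Measure.eq_prod_of_integral_mul_boundedContinuousFunction
    fun f g ↦ ?_)
  let F : X × Y →ᵇ ℝ := f.compContinuous .fst * g.compContinuous .snd
  have hcont := (continuous_integral_boundedContinuousFunction F).tendsto ρ'
  exact eq_of_nhds_neBot (ClusterPt.mono (hρ'.tendsto_comp hcont) (h f g))

end MeasureTheory.ProbabilityMeasure

end Product

/-- If `E[e^{ψ(U_n)} F(V_n)] → μ₀(e^ψ) · ν(F)` for all bounded continuous
`ψ` and `F`, then the joint law of `(U_n, V_n)` converges weakly to the product `μ₀ ⊗ ν`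
(weak convergence tested against bounded continuous functions on the product). -/
theorem stmt_15 {S S' : Type*}
    [TopologicalSpace S] [PolishSpace S] [MeasurableSpace S] [BorelSpace S]
    [TopologicalSpace S'] [PolishSpace S'] [MeasurableSpace S'] [BorelSpace S']
    (Ω : ℕ → Type*) [∀ n, MeasurableSpace (Ω n)]
    (P : ∀ n, Measure (Ω n)) [∀ n, IsProbabilityMeasure (P n)]
    (U : ∀ n, Ω n → S) (V : ∀ n, Ω n → S')
    (hU : ∀ n, Measurable (U n)) (hV : ∀ n, Measurable (V n))
    (μ₀ : Measure S) [IsProbabilityMeasure μ₀]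
    (ν : Measure S') [IsProbabilityMeasure ν]
    (h : ∀ (ψ : BoundedContinuousFunction S ℝ) (F : BoundedContinuousFunction S' ℝ),
        Tendsto (fun n => ∫ ω, Real.exp (ψ (U n ω)) * F (V n ω) ∂(P n)) atTop
          (𝓝 ((∫ x, Real.exp (ψ x) ∂μ₀) * ∫ y, F y ∂ν))) :
    ∀ G : BoundedContinuousFunction (S × S') ℝ,
      Tendsto (fun n => ∫ ω, G (U n ω, V n ω) ∂(P n)) atTop
        (𝓝 (∫ q, G q ∂(μ₀.prod ν))) := by
  let law (n : ℕ) : ProbabilityMeasure (S × S') :=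
    ProbabilityMeasure.map ⟨P n, inferInstance⟩ ((hU n).prodMk (hV n)).aemeasurable
  have integral_law (n : ℕ) {f : S × S' → ℝ} (hf : Continuous f) :
      ∫ q, f q ∂(law n : Measure (S × S')) = ∫ ω, f (U n ω, V n ω) ∂(P n) :=
    integral_map ((hU n).prodMk (hV n)).aemeasurable hf.aestronglyMeasurable
  have hprod := tendsto_integral_mul_of_tendsto_integral_exp_mul
    (ρ := fun n ↦ (law n : Measure (S × S'))) fun ψ F ↦ by
      have hcont : Continuous fun q : S × S' ↦ Real.exp (ψ q.1) * F q.2 := by fun_prop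
      simpa only [integral_law _ hcont] using h ψ F
  have hlaw : Tendsto law atTop
      (𝓝 (ProbabilityMeasure.prod ⟨μ₀, inferInstance⟩ ⟨ν, inferInstance⟩)) :=
    ProbabilityMeasure.tendsto_prod_of_tendsto_integral_mul hprod
  intro G
  simp only [← integral_law _ G.continuous]
  exact ProbabilityMeasure.tendsto_iff_forall_integral_tendsto.1 hlaw G
end
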